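/- arXiv:2511.08000 — 3 statements merged into one kernel-verified Lean document; each statement's English description precedes it below -/
import Mathlib

section
/- Let p ∈ (1, 2] and suppose f, g ∈ L^p satisfy f ⊥_p g (Birkhoff–James orthogonality). Then ‖f + g‖_p^p ≤ ‖f‖_p^p + (1/(2^{p-1} − 1))·‖g‖_p^p. -/
open MeasureTheory
open scoped ENNReal

/-!
For `p ≤ 2`, the parallelogram law and concavity of `x ↦ x ^ (p / 2)` give the two-point
inequality `‖x + y‖ ^ p + ‖x - y‖ ^ p ≤ 2 ‖x‖ ^ p + 2 ‖y‖ ^ p`, which integrates to `L^p`.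
Along the line `t ↦ f + t g` it says that `φ t = ‖f + t g‖_p ^ p` satisfies
`φ (m + d) + φ (m - d) ≤ 2 φ m + 2 |d| ^ p ‖g‖_p ^ p`, while orthogonality says that `φ` is
minimal at `0`. Hence `ψ t = (φ t - φ 0) / t ^ p` is bounded and
`2 ^ (p - 1) ψ (2 t) ≤ ψ t + ‖g‖_p ^ p`, so its supremum `M` satisfies
`2 ^ (p - 1) M ≤ M + ‖g‖_p ^ p`, and `ψ 1 ≤ M` is the claim.
-/

theorem norm_add_rpow_add_norm_sub_rpow_le (𝕜 : Type*) {E : Type*} [RCLike 𝕜]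
    [NormedAddCommGroup E] [InnerProductSpace 𝕜 E] {p : ℝ} (hp0 : 0 < p) (hp2 : p ≤ 2) (x y : E) :
    ‖x + y‖ ^ p + ‖x - y‖ ^ p ≤ 2 * ‖x‖ ^ p + 2 * ‖y‖ ^ p := by
  have hr0 : 0 ≤ p / 2 := by positivity
  have hr1 : p / 2 ≤ 1 := by linarith
  set r := p / 2
  have hpow (z : E) : ‖z‖ ^ p = (‖z‖ ^ 2) ^ r := by
    rw [← Real.rpow_natCast, ← Real.rpow_mul (norm_nonneg z)]
    congr 1; push_cast; ring
  have hpar : ‖x + y‖ ^ 2 + ‖x - y‖ ^ 2 = 2 * (‖x‖ ^ 2 + ‖y‖ ^ 2) := by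
    simpa only [sq] using parallelogram_law_with_norm 𝕜 x y
  have hconc := (Real.concaveOn_rpow hr0 hr1).2 (sq_nonneg ‖x + y‖) (sq_nonneg ‖x - y‖)
    (by norm_num : (0 : ℝ) ≤ 1 / 2) (by norm_num : (0 : ℝ) ≤ 1 / 2) (by norm_num)
  simp only [smul_eq_mul] at hconc
  calc ‖x + y‖ ^ p + ‖x - y‖ ^ p
      = 2 * (1 / 2 * (‖x + y‖ ^ 2) ^ r + 1 / 2 * (‖x - y‖ ^ 2) ^ r) := by rw [hpow, hpow]; ring
    _ ≤ 2 * (1 / 2 * ‖x + y‖ ^ 2 + 1 / 2 * ‖x - y‖ ^ 2) ^ r := by gcongr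
    _ = 2 * (‖x‖ ^ 2 + ‖y‖ ^ 2) ^ r := by congr 2; linarith
    _ ≤ 2 * ((‖x‖ ^ 2) ^ r + (‖y‖ ^ 2) ^ r) := by
        gcongr; exact Real.rpow_add_le_add_rpow (sq_nonneg _) (sq_nonneg _) hr0 hr1
    _ = 2 * ‖x‖ ^ p + 2 * ‖y‖ ^ p := by rw [hpow, hpow]; ring

theorem le_div_sub_one_of_mul_le_of_bddAbove {ψ : ℝ → ℝ} {c G : ℝ} (hc : 1 < c)
    (hbdd : BddAbove (ψ '' Set.Ioi 0)) (hψ : ∀ t > 0, c * ψ (2 * t) ≤ ψ t + G) {t : ℝ}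
    (ht : 0 < t) : ψ t ≤ G / (c - 1) := by
  set M := sSup (ψ '' Set.Ioi 0)
  have hle {s : ℝ} (hs : 0 < s) : ψ s ≤ M := le_csSup hbdd (Set.mem_image_of_mem ψ hs)
  have hM : c * M ≤ M + G := by
    rw [← le_div_iff₀' (by linarith)]
    refine csSup_le (Set.nonempty_Ioi.image ψ) ?_
    rintro _ ⟨s, hs, rfl⟩
    have h := hψ (s / 2) (half_pos hs)
    rw [mul_div_cancel₀ s two_ne_zero] at h
    rw [le_div_iff₀' (by linarith)]
    linarith [hle (half_pos hs)]
  rw [le_div_iff₀ (by linarith)]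
  nlinarith [hle ht]

theorem le_add_div_mul_rpow_of_midpoint_le {φ : ℝ → ℝ} {p G : ℝ} (hp : 1 < p)
    (hmid : ∀ m d, φ (m + d) + φ (m - d) ≤ 2 * φ m + 2 * |d| ^ p * G)
    (hmin : ∀ t, φ 0 ≤ φ t) {t : ℝ} (ht : 0 < t) :
    φ t ≤ φ 0 + G / (2 ^ (p - 1) - 1) * t ^ p := by
  set ψ : ℝ → ℝ := fun t => (φ t - φ 0) / t ^ p
  have hc : (1 : ℝ) < 2 ^ (p - 1) := Real.one_lt_rpow one_lt_two (by linarith)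
  have hbdd : BddAbove (ψ '' Set.Ioi 0) := by
    refine ⟨2 * G, ?_⟩
    rintro _ ⟨s, hs : 0 < s, rfl⟩
    have h := hmid 0 s
    rw [zero_add, zero_sub, abs_of_pos hs] at h
    have := hmin (-s)
    rw [div_le_iff₀ (by positivity)]
    linarith
  have hψ : ∀ s > 0, 2 ^ (p - 1) * ψ (2 * s) ≤ ψ s + G := by
    intro s hs
    have h := hmid s s
    rw [← two_mul, sub_self, abs_of_pos hs] at h
    have h2 : (2 * s) ^ p = 2 * 2 ^ (p - 1) * s ^ p := by
      rw [Real.mul_rpow zero_le_two hs.le, Real.rpow_sub_one two_ne_zero]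
      ring
    have hsp : 0 < s ^ p := by positivity
    simp only [ψ]
    rw [h2]
    field_simp
    linarith
  have := le_div_sub_one_of_mul_le_of_bddAbove hc hbdd hψ ht
  have htp : 0 < t ^ p := by positivity
  simp only [ψ, div_le_iff₀ htp] at this
  linarith

namespace MeasureTheory

variable {α E : Type*} [MeasurableSpace α] {μ : Measure α} [NormedAddCommGroup E] {p : ℝ}

theorem MemLp.toReal_eLpNorm_rpow_eq_integral {f : α → E} (hp : 0 < p)
    (hf : MemLp f (ENNReal.ofReal p) μ) :
    (eLpNorm f (ENNReal.ofReal p) μ).toReal ^ p = ∫ a, ‖f a‖ ^ p ∂μ := by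
  have hint : 0 ≤ ∫ a, ‖f a‖ ^ p ∂μ := integral_nonneg fun a => by positivity
  rw [hf.eLpNorm_eq_integral_rpow_norm (by simpa using hp) ENNReal.ofReal_ne_top,
    ENNReal.toReal_ofReal hp.le, ENNReal.toReal_ofReal (by positivity),
    Real.rpow_inv_rpow hint hp.ne']

theorem eLpNorm_add_rpow_add_eLpNorm_sub_rpow_le (𝕜 : Type*) [RCLike 𝕜] [InnerProductSpace 𝕜 E]
    {f g : α → E} (hp0 : 0 < p) (hp2 : p ≤ 2)
    (hf : MemLp f (ENNReal.ofReal p) μ) (hg : MemLp g (ENNReal.ofReal p) μ) :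
    (eLpNorm (f + g) (ENNReal.ofReal p) μ).toReal ^ p +
        (eLpNorm (f - g) (ENNReal.ofReal p) μ).toReal ^ p ≤
      2 * (eLpNorm f (ENNReal.ofReal p) μ).toReal ^ p +
        2 * (eLpNorm g (ENNReal.ofReal p) μ).toReal ^ p := by
  have hint {h : α → E} (hh : MemLp h (ENNReal.ofReal p) μ) :
      Integrable (fun a => ‖h a‖ ^ p) μ := by
    simpa [ENNReal.toReal_ofReal hp0.le] using
      hh.integrable_norm_rpow (by simpa using hp0) ENNReal.ofReal_ne_top
  rw [MemLp.toReal_eLpNorm_rpow_eq_integral hp0 (hf.add hg),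
    MemLp.toReal_eLpNorm_rpow_eq_integral hp0 (hf.sub hg),
    hf.toReal_eLpNorm_rpow_eq_integral hp0, hg.toReal_eLpNorm_rpow_eq_integral hp0,
    ← integral_add (hint (hf.add hg)) (hint (hf.sub hg)), ← integral_const_mul,
    ← integral_const_mul, ← integral_add ((hint hf).const_mul 2) ((hint hg).const_mul 2)]
  exact integral_mono ((hint (hf.add hg)).add (hint (hf.sub hg)))
    (((hint hf).const_mul 2).add ((hint hg).const_mul 2))
    fun a => norm_add_rpow_add_norm_sub_rpow_le 𝕜 hp0 hp2 (f a) (g a)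

theorem eLpNorm_add_smul_rpow_midpoint_le {𝕜 : Type*} [RCLike 𝕜] [InnerProductSpace 𝕜 E]
    {f g : α → E} (hp0 : 0 < p) (hp2 : p ≤ 2)
    (hf : MemLp f (ENNReal.ofReal p) μ) (hg : MemLp g (ENNReal.ofReal p) μ) (m d : ℝ) :
    (eLpNorm (f + ((m + d : ℝ) : 𝕜) • g) (ENNReal.ofReal p) μ).toReal ^ p +
        (eLpNorm (f + ((m - d : ℝ) : 𝕜) • g) (ENNReal.ofReal p) μ).toReal ^ p ≤
      2 * (eLpNorm (f + (m : 𝕜) • g) (ENNReal.ofReal p) μ).toReal ^ p +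
        2 * |d| ^ p * (eLpNorm g (ENNReal.ofReal p) μ).toReal ^ p := by
  have h := eLpNorm_add_rpow_add_eLpNorm_sub_rpow_le 𝕜 hp0 hp2 (hf.add (hg.const_smul (m : 𝕜)))
    (hg.const_smul (d : 𝕜))
  rw [eLpNorm_const_smul, ENNReal.toReal_mul, toReal_enorm, RCLike.norm_ofReal,
    Real.mul_rpow (abs_nonneg d) ENNReal.toReal_nonneg] at h
  have hadd : f + (m : 𝕜) • g + (d : 𝕜) • g = f + ((m + d : ℝ) : 𝕜) • g := by
    push_cast; module
  have hsub : f + (m : 𝕜) • g - (d : 𝕜) • g = f + ((m - d : ℝ) : 𝕜) • g := by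
    push_cast; module
  rw [hadd, hsub] at h
  linarith

end MeasureTheory

/-- Upper Pythagorean inequality for `1 < p ≤ 2`. -/
theorem stmt1 {α : Type*} [MeasurableSpace α] (μ : Measure α) (p : ℝ) (hp1 : 1 < p)
    (hp2 : p ≤ 2) (f g : α → ℂ)
    (hf : MemLp f (ENNReal.ofReal p) μ) (hg : MemLp g (ENNReal.ofReal p) μ)
    (horth : ∀ β : ℂ, eLpNorm f (ENNReal.ofReal p) μ ≤ eLpNorm (f + β • g) (ENNReal.ofReal p) μ) :
    (eLpNorm (f + g) (ENNReal.ofReal p) μ).toReal ^ p ≤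
      (eLpNorm f (ENNReal.ofReal p) μ).toReal ^ p +
        (1 / (2 ^ (p - 1) - 1)) * (eLpNorm g (ENNReal.ofReal p) μ).toReal ^ p := by
  have hp0 : 0 < p := by linarith
  set φ : ℝ → ℝ := fun t => (eLpNorm (f + (t : ℂ) • g) (ENNReal.ofReal p) μ).toReal ^ p
  have hmin (t : ℝ) : φ 0 ≤ φ t := by
    simp only [φ, Complex.ofReal_zero, zero_smul, add_zero]
    gcongr
    · exact (hf.add (hg.const_smul _)).eLpNorm_ne_top
    · exact horth t
  have h := le_add_div_mul_rpow_of_midpoint_le (φ := φ) hp1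
    (eLpNorm_add_smul_rpow_midpoint_le hp0 hp2 hf hg) hmin one_pos
  simpa [φ, div_eq_inv_mul] using h
end

section
/- Let p ∈ (1, 2] and suppose f, g ∈ L^p satisfy f ⊥_p g (Birkhoff–James orthogonality). Then ‖f + g‖_p^2 ≥ ‖f‖_p^2 + (p − 1)·‖g‖_p^2. -/
/-!
In `L^p`, `1 < p ≤ 2`, one has the 2-uniform convexity inequality
`‖x + y‖² + (p - 1) ‖x - y‖² ≤ 2 (‖x‖² + ‖y‖²)`. It comes from the two-point inequality
`(|a + b|² + (p - 1) |a - b|²) ^ (p / 2) ≤ 2 ^ (p - 1) (|a| ^ p + |b| ^ p)`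
(Ball–Carlen–Lieb), integrated with the help of the reverse Minkowski inequality in `L^{p/2}`
and the power-mean inequality.

Applied to `f` and `f + 2s g` it gives `2 ψ(s) ≤ ψ(0) + ψ(2s)` for
`ψ(t) = ‖f + t g‖² - (p - 1) t² ‖g‖²`, while orthogonality gives
`ψ(t) ≥ ψ(0) - (p - 1) t² ‖g‖²`.
Along the dyadic points `t = 2⁻ⁿ` the first inequality yields
`2ⁿ (ψ(2⁻ⁿ) - ψ(0)) ≤ ψ(1) - ψ(0)`, and the second bounds the left side below by
`-(p - 1) 2⁻ⁿ ‖g‖² → 0`, so `ψ(0) ≤ ψ(1)`.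
-/

open Real Set Filter Topology MeasureTheory
open scoped ENNReal

theorem two_le_one_add_rpow_add_one_sub_rpow {c x : ℝ} (hc : c ≤ 0) (hx₁ : 0 < 1 + x)
    (hx₂ : 0 < 1 - x) : 2 ≤ (1 + x) ^ c + (1 - x) ^ c := by
  -- AM-GM: the two terms have geometric mean `((1 + x) (1 - x)) ^ (c / 2) ≥ 1`.
  have hgm : 1 ≤ (1 + x) ^ (c / 2) * (1 - x) ^ (c / 2) := by
    rw [← mul_rpow hx₁.le hx₂.le]
    exact one_le_rpow_of_pos_of_le_one_of_nonpos (by positivity) (by nlinarith [sq_nonneg x])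
      (by linarith)
  have hsq : ∀ y : ℝ, 0 < y → (y ^ (c / 2)) ^ 2 = y ^ c := fun y hy => by
    rw [← rpow_natCast, ← rpow_mul hy.le]; norm_num
  nlinarith [sq_nonneg ((1 + x) ^ (c / 2) - (1 - x) ^ (c / 2)), hsq _ hx₁, hsq _ hx₂]

theorem two_mul_mul_le_one_add_rpow_sub_one_sub_rpow {q t : ℝ} (hq₀ : 0 < q) (hq₁ : q ≤ 1)
    (ht₀ : 0 ≤ t) (ht₁ : t ≤ 1) : 2 * q * t ≤ (1 + t) ^ q - (1 - t) ^ q := by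
  let k x := (1 + x) ^ q - (1 - x) ^ q - 2 * q * x
  have hk : MonotoneOn k (Icc 0 1) := by
    refine monotoneOn_of_hasDerivWithinAt_nonneg (convex_Icc 0 1)
      (f' := fun x => q * (1 + x) ^ (q - 1) + q * (1 - x) ^ (q - 1) - 2 * q) ?_ ?_ ?_
    · have := continuous_rpow_const hq₀.le
      exact Continuous.continuousOn (by fun_prop)
    · rw [interior_Icc]
      rintro x ⟨hx₀, hx₁⟩
      have h₁ := ((hasDerivAt_id x).const_add 1).rpow_const (p := q) (Or.inl (by simp; linarith))
      have h₂ := ((hasDerivAt_id x).const_sub 1).rpow_const (p := q) (Or.inl (by simp; linarith))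
      refine (((h₁.sub h₂).sub ((hasDerivAt_id x).const_mul (2 * q))).congr_deriv
        ?_).hasDerivWithinAt
      simp only [id]; ring
    · rw [interior_Icc]
      rintro x ⟨hx₀, hx₁⟩
      nlinarith [two_le_one_add_rpow_add_one_sub_rpow (c := q - 1) (by linarith)
        (by linarith : 0 < 1 + x) (by linarith : 0 < 1 - x)]
  have := hk (left_mem_Icc.2 zero_le_one) ⟨ht₀, ht₁⟩ ht₀
  simp only [k, add_zero, one_rpow, sub_zero, sub_self, mul_zero, sub_nonneg] at this
  linarith

theorem two_add_mul_sq_le_one_add_rpow_add_one_sub_rpow {p t : ℝ} (hp₁ : 1 < p) (hp₂ : p ≤ 2)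
    (ht₀ : 0 ≤ t) (ht₁ : t ≤ 1) : 2 + p * (p - 1) * t ^ 2 ≤ (1 + t) ^ p + (1 - t) ^ p := by
  let h x := (1 + x) ^ p + (1 - x) ^ p - p * (p - 1) * x ^ 2
  have hh : MonotoneOn h (Icc 0 1) := by
    refine monotoneOn_of_hasDerivWithinAt_nonneg (convex_Icc 0 1)
      (f' := fun x => p * ((1 + x) ^ (p - 1) - (1 - x) ^ (p - 1) - 2 * (p - 1) * x)) ?_ ?_ ?_
    · have := continuous_rpow_const (by linarith : 0 ≤ p)
      exact Continuous.continuousOn (by fun_prop)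
    · rw [interior_Icc]
      rintro x ⟨hx₀, hx₁⟩
      have h₁ := ((hasDerivAt_id x).const_add 1).rpow_const (p := p) (Or.inl (by simp; linarith))
      have h₂ := ((hasDerivAt_id x).const_sub 1).rpow_const (p := p) (Or.inl (by simp; linarith))
      refine (((h₁.add h₂).sub ((hasDerivAt_pow 2 x).const_mul (p * (p - 1)))).congr_deriv
        ?_).hasDerivWithinAt
      simp only [id]; ring
    · rw [interior_Icc]
      rintro x ⟨hx₀, hx₁⟩
      have := two_mul_mul_le_one_add_rpow_sub_one_sub_rpow (q := p - 1) (by linarith)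
        (by linarith) hx₀.le hx₁.le
      nlinarith
  have := hh (left_mem_Icc.2 zero_le_one) ⟨ht₀, ht₁⟩ ht₀
  simp only [h, add_zero, sub_zero, one_rpow, ne_eq, OfNat.ofNat_ne_zero, not_false_eq_true,
    zero_pow, mul_zero] at this
  linarith

theorem one_add_mul_sq_rpow_le_one_add_rpow_add_one_sub_rpow_div_two {p t : ℝ} (hp₁ : 1 < p)
    (hp₂ : p ≤ 2) (ht : |t| ≤ 1) :
    (1 + (p - 1) * t ^ 2) ^ (p / 2) ≤ ((1 + t) ^ p + (1 - t) ^ p) / 2 := by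
  have hquad : 2 + p * (p - 1) * t ^ 2 ≤ (1 + t) ^ p + (1 - t) ^ p := by
    rcases le_total 0 t with ht₀ | ht₀
    · exact two_add_mul_sq_le_one_add_rpow_add_one_sub_rpow hp₁ hp₂ ht₀ (le_of_abs_le ht)
    · have := two_add_mul_sq_le_one_add_rpow_add_one_sub_rpow (t := -t) hp₁ hp₂ (by linarith)
        (by linarith [neg_abs_le t])
      rw [neg_sq, sub_neg_eq_add, ← sub_eq_add_neg] at this
      linarith
  calc (1 + (p - 1) * t ^ 2) ^ (p / 2) ≤ 1 + p / 2 * ((p - 1) * t ^ 2) :=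
        rpow_one_add_le_one_add_mul_self (by nlinarith) (by linarith) (by linarith)
    _ ≤ ((1 + t) ^ p + (1 - t) ^ p) / 2 := by linarith

theorem add_sq_add_mul_sub_sq_rpow_le {p A B : ℝ} (hp₁ : 1 < p) (hp₂ : p ≤ 2) (hA : 0 ≤ A)
    (hB : 0 ≤ B) :
    ((A + B) ^ 2 + (p - 1) * (A - B) ^ 2) ^ (p / 2) ≤ 2 ^ (p - 1) * (A ^ p + B ^ p) := by
  rcases (add_nonneg hA hB).eq_or_lt with hS | hS
  · obtain ⟨rfl, rfl⟩ : A = 0 ∧ B = 0 := ⟨by linarith, by linarith⟩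
    simp [zero_rpow (by linarith : p ≠ 0), zero_rpow (by linarith : p / 2 ≠ 0)]
  set t := (A - B) / (A + B) with ht_def
  have ht : |t| ≤ 1 := by
    rw [abs_div, abs_of_pos hS, div_le_one hS]
    exact abs_sub_le_of_nonneg_of_le hA (by linarith) hB (by linarith)
  have hSp : ((A + B) ^ 2) ^ (p / 2) = (A + B) ^ p := by
    rw [← rpow_natCast, ← rpow_mul hS.le]; congr 1; ring
  have h₁ : 1 + t = 2 * A / (A + B) := by rw [ht_def]; field_simp; ring
  have h₂ : 1 - t = 2 * B / (A + B) := by rw [ht_def]; field_simp; ring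
  calc ((A + B) ^ 2 + (p - 1) * (A - B) ^ 2) ^ (p / 2)
      = (A + B) ^ p * (1 + (p - 1) * t ^ 2) ^ (p / 2) := by
        rw [← hSp, ← mul_rpow (by positivity) (by nlinarith)]
        congr 1
        rw [ht_def]
        field_simp
    _ ≤ (A + B) ^ p * (((1 + t) ^ p + (1 - t) ^ p) / 2) := by
        gcongr
        exact one_add_mul_sq_rpow_le_one_add_rpow_add_one_sub_rpow_div_two hp₁ hp₂ ht
    _ = 2 ^ (p - 1) * (A ^ p + B ^ p) := by
        rw [h₁, h₂, div_rpow (by positivity) hS.le, div_rpow (by positivity) hS.le,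
          mul_rpow (by norm_num) hA, mul_rpow (by norm_num) hB, rpow_sub (by norm_num), rpow_one]
        field_simp

theorem norm_add_sq_add_mul_norm_sub_sq_rpow_le {E : Type*} [NormedAddCommGroup E]
    [InnerProductSpace ℝ E] {p : ℝ} (hp₁ : 1 < p) (hp₂ : p ≤ 2) (a b : E) :
    (‖a + b‖ ^ 2 + (p - 1) * ‖a - b‖ ^ 2) ^ (p / 2) ≤ 2 ^ (p - 1) * (‖a‖ ^ p + ‖b‖ ^ p) := by
  -- The inner product enters with the coefficient `2 (2 - p) ≥ 0`, so Cauchy–Schwarz reduces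
  -- the claim to collinear `a`, `b`.
  have hCS : ‖a + b‖ ^ 2 + (p - 1) * ‖a - b‖ ^ 2 ≤
      (‖a‖ + ‖b‖) ^ 2 + (p - 1) * (‖a‖ - ‖b‖) ^ 2 := by
    rw [norm_add_sq_real, norm_sub_sq_real]
    nlinarith [real_inner_le_norm a b]
  exact (rpow_le_rpow (by positivity) hCS (by positivity)).trans
    (add_sq_add_mul_sub_sq_rpow_le hp₁ hp₂ (norm_nonneg a) (norm_nonneg b))

theorem ENNReal.rpow_mul_rpow_add_rpow_mul_rpow_le {r : ℝ} (hr₀ : 0 < r) (hr₁ : r ≤ 1)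
    (a b x y : ℝ≥0∞) :
    a ^ (1 - r) * x ^ r + b ^ (1 - r) * y ^ r ≤ (a + b) ^ (1 - r) * (x + y) ^ r := by
  rcases hr₁.eq_or_lt with rfl | hr₁
  · simp
  have := ENNReal.inner_le_Lp_mul_Lq Finset.univ ![a ^ (1 - r), b ^ (1 - r)] ![x ^ r, y ^ r]
    (Real.HolderConjugate.one_sub_inv_inv hr₀ hr₁)
  simpa [Fin.sum_univ_two, ← ENNReal.rpow_mul, (sub_pos.2 hr₁).ne', hr₀.ne'] using this

theorem ENNReal.lintegral_Lp_add_lintegral_Lp_le_of_le_one {α : Type*} [MeasurableSpace α]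
    {μ : Measure α} {r : ℝ} {f g : α → ℝ≥0∞} (hf : AEMeasurable f μ) (hg : AEMeasurable g μ)
    (hr₀ : 0 < r) (hr₁ : r ≤ 1) :
    (∫⁻ a, f a ^ r ∂μ) ^ (1 / r) + (∫⁻ a, g a ^ r ∂μ) ^ (1 / r) ≤
      (∫⁻ a, (f + g) a ^ r ∂μ) ^ (1 / r) := by
  set A := (∫⁻ a, f a ^ r ∂μ) ^ (1 / r)
  set B := (∫⁻ a, g a ^ r ∂μ) ^ (1 / r)
  set I := ∫⁻ a, (f + g) a ^ r ∂μ
  have hpow : ∀ J : ℝ≥0∞, (J ^ (1 / r)) ^ r = J := fun J => by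
    rw [← ENNReal.rpow_mul, one_div_mul_cancel hr₀.ne', ENNReal.rpow_one]
  have hfI : ∫⁻ a, f a ^ r ∂μ ≤ I :=
    lintegral_mono fun a => ENNReal.rpow_le_rpow le_self_add hr₀.le
  have hgI : ∫⁻ a, g a ^ r ∂μ ≤ I :=
    lintegral_mono fun a => ENNReal.rpow_le_rpow le_add_self hr₀.le
  rcases eq_or_ne I ⊤ with hI | hI
  · simp [hI, hr₀]
  rcases eq_or_ne (A + B) 0 with h0 | h0
  · simp [h0]
  have hAB : A + B ≠ ⊤ := ENNReal.add_ne_top.2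
    ⟨ENNReal.rpow_ne_top_of_nonneg (by positivity) (ne_top_of_le_ne_top hI hfI),
     ENNReal.rpow_ne_top_of_nonneg (by positivity) (ne_top_of_le_ne_top hI hgI)⟩
  have hsplit : ∀ C : ℝ≥0∞, C ^ (1 - r) * C ^ r = C := fun C => by
    rw [← ENNReal.rpow_add_of_nonneg _ _ (by linarith) hr₀.le]; norm_num
  have hA : A ^ r = ∫⁻ a, f a ^ r ∂μ := hpow _
  have hB : B ^ r = ∫⁻ a, g a ^ r ∂μ := hpow _
  -- Hölder pointwise with weights `A, B`, then integrate.
  have hweighted : (A + B) ^ (1 - r) * (A + B) ^ r ≤ (A + B) ^ (1 - r) * I := calc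
    (A + B) ^ (1 - r) * (A + B) ^ r = A ^ (1 - r) * A ^ r + B ^ (1 - r) * B ^ r := by
      rw [hsplit, hsplit, hsplit]
    _ = ∫⁻ a, (A ^ (1 - r) * f a ^ r + B ^ (1 - r) * g a ^ r) ∂μ := by
      rw [hA, hB, lintegral_add_left' ((hf.pow_const r).const_mul _), lintegral_const_mul'' _
        (hf.pow_const r), lintegral_const_mul'' _ (hg.pow_const r)]
    _ ≤ (A + B) ^ (1 - r) * I := by
      rw [← lintegral_const_mul'' _ ((hf.add hg).pow_const r)]
      exact lintegral_mono fun a =>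
        ENNReal.rpow_mul_rpow_add_rpow_mul_rpow_le hr₀ hr₁ A B (f a) (g a)
  have hAB_r : (A + B) ^ r ≤ I := (ENNReal.mul_le_mul_iff_right
    (ENNReal.rpow_pos (pos_iff_ne_zero.2 h0) hAB).ne'
    (ENNReal.rpow_ne_top_of_nonneg (by linarith) hAB)).1 hweighted
  have := ENNReal.rpow_le_rpow hAB_r (by positivity : 0 ≤ 1 / r)
  rwa [← ENNReal.rpow_mul, mul_one_div_cancel hr₀.ne', ENNReal.rpow_one] at this

theorem enorm_add_sq_add_mul_enorm_sub_sq_rpow_le {E : Type*} [NormedAddCommGroup E]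
    [InnerProductSpace ℝ E] {p : ℝ} (hp₁ : 1 < p) (hp₂ : p ≤ 2) (a b : E) :
    (‖a + b‖ₑ ^ 2 + ENNReal.ofReal (p - 1) * ‖a - b‖ₑ ^ 2) ^ (p / 2) ≤
      2 ^ (p - 1) * (‖a‖ₑ ^ p + ‖b‖ₑ ^ p) := by
  have h := ENNReal.ofReal_le_ofReal (norm_add_sq_add_mul_norm_sub_sq_rpow_le hp₁ hp₂ a b)
  rwa [ENNReal.ofReal_mul (by positivity), ENNReal.ofReal_add (by positivity) (by positivity),
    ← ENNReal.ofReal_rpow_of_nonneg (by positivity) (by positivity),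
    ENNReal.ofReal_add (by positivity) (by positivity), ENNReal.ofReal_mul (by linarith),
    ← ENNReal.ofReal_rpow_of_pos two_pos, ENNReal.ofReal_ofNat,
    ← ENNReal.ofReal_rpow_of_nonneg (norm_nonneg _) (by linarith),
    ← ENNReal.ofReal_rpow_of_nonneg (norm_nonneg _) (by linarith),
    ENNReal.ofReal_pow (norm_nonneg _), ENNReal.ofReal_pow (norm_nonneg _),
    ofReal_norm, ofReal_norm, ofReal_norm, ofReal_norm] at h

theorem ENNReal.two_rpow_mul_rpow_add_rpow_rpow_le {p : ℝ} (hp₀ : 0 < p) (hp₂ : p ≤ 2)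
    (x y : ℝ≥0∞) : (2 ^ (p - 1) * (x ^ p + y ^ p)) ^ (2 / p) ≤ 2 * (x ^ 2 + y ^ 2) := by
  have hpow : ∀ z : ℝ≥0∞, (z ^ p) ^ (2 / p) = z ^ 2 := fun z => by
    rw [← ENNReal.rpow_mul, mul_div_cancel₀ _ hp₀.ne', ENNReal.rpow_two]
  calc (2 ^ (p - 1) * (x ^ p + y ^ p)) ^ (2 / p)
      = 2 ^ ((p - 1) * (2 / p)) * (x ^ p + y ^ p) ^ (2 / p) := by
        rw [ENNReal.mul_rpow_of_nonneg _ _ (by positivity), ← ENNReal.rpow_mul]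
    _ ≤ 2 ^ ((p - 1) * (2 / p)) * (2 ^ (2 / p - 1) * (x ^ 2 + y ^ 2)) := by
        gcongr
        rw [← hpow x, ← hpow y]
        exact ENNReal.rpow_add_le_mul_rpow_add_rpow _ _ ((one_le_div₀ hp₀).2 hp₂)
    _ = 2 * (x ^ 2 + y ^ 2) := by
        have hexp : (p - 1) * (2 / p) + (2 / p - 1) = 1 := by field_simp; ring
        rw [← mul_assoc, ← ENNReal.rpow_add _ _ two_ne_zero ENNReal.ofNat_ne_top, hexp,
          ENNReal.rpow_one]

theorem eLpNorm_add_sq_add_mul_eLpNorm_sub_sq_le {α E : Type*} [MeasurableSpace α]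
    {μ : Measure α} [NormedAddCommGroup E] [InnerProductSpace ℝ E] {p : ℝ} (hp₁ : 1 < p)
    (hp₂ : p ≤ 2) {x y : α → E} (hx : AEStronglyMeasurable x μ)
    (hy : AEStronglyMeasurable y μ) :
    eLpNorm (x + y) (.ofReal p) μ ^ 2 + .ofReal (p - 1) * eLpNorm (x - y) (.ofReal p) μ ^ 2 ≤
      2 * (eLpNorm x (.ofReal p) μ ^ 2 + eLpNorm y (.ofReal p) μ ^ 2) := by
  have hp₀ : 0 < p := by linarith
  simp only [eLpNorm_eq_eLpNorm' (by simpa using hp₀) ENNReal.ofReal_ne_top,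
    ENNReal.toReal_ofReal hp₀.le]
  -- View `‖x ± y‖ₚ²` as the `L^{p/2}` quasi-norm of `‖x ± y‖²`.
  have hr : 0 < p / 2 := by positivity
  have hnorm : ∀ h : α → E, (∫⁻ a, (‖h a‖ₑ ^ 2) ^ (p / 2) ∂μ) ^ (1 / (p / 2)) =
      eLpNorm' h p μ ^ 2 := fun h => by
    simp_rw [← ENNReal.rpow_natCast, ← ENNReal.rpow_mul]
    rw [Nat.cast_ofNat, mul_div_cancel₀ _ two_ne_zero,
      lintegral_rpow_enorm_eq_rpow_eLpNorm' hp₀, ← ENNReal.rpow_mul]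
    congr 1
    field_simp
  have hnorm' : (∫⁻ a, (.ofReal (p - 1) * ‖(x - y) a‖ₑ ^ 2) ^ (p / 2) ∂μ) ^ (1 / (p / 2)) =
      .ofReal (p - 1) * eLpNorm' (x - y) p μ ^ 2 := by
    simp_rw [ENNReal.mul_rpow_of_nonneg _ _ hr.le]
    rw [lintegral_const_mul' _ _ (ENNReal.rpow_ne_top_of_nonneg hr.le ENNReal.ofReal_ne_top),
      ENNReal.mul_rpow_of_nonneg _ _ (by positivity), ← ENNReal.rpow_mul,
      mul_one_div_cancel hr.ne', ENNReal.rpow_one, hnorm]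
  have hpointwise :
      ∫⁻ a, (‖(x + y) a‖ₑ ^ 2 + .ofReal (p - 1) * ‖(x - y) a‖ₑ ^ 2) ^ (p / 2) ∂μ ≤
        2 ^ (p - 1) * (eLpNorm' x p μ ^ p + eLpNorm' y p μ ^ p) := calc
    _ ≤ ∫⁻ a, 2 ^ (p - 1) * (‖x a‖ₑ ^ p + ‖y a‖ₑ ^ p) ∂μ :=
      lintegral_mono fun a => enorm_add_sq_add_mul_enorm_sub_sq_rpow_le hp₁ hp₂ (x a) (y a)
    _ = 2 ^ (p - 1) * (eLpNorm' x p μ ^ p + eLpNorm' y p μ ^ p) := by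
      rw [lintegral_const_mul' _ _
          (ENNReal.rpow_ne_top_of_nonneg (by linarith) ENNReal.ofNat_ne_top),
        lintegral_add_left' (hx.enorm.pow_const p), lintegral_rpow_enorm_eq_rpow_eLpNorm' hp₀,
        lintegral_rpow_enorm_eq_rpow_eLpNorm' hp₀]
  calc eLpNorm' (x + y) p μ ^ 2 + .ofReal (p - 1) * eLpNorm' (x - y) p μ ^ 2
      = (∫⁻ a, (‖(x + y) a‖ₑ ^ 2) ^ (p / 2) ∂μ) ^ (1 / (p / 2)) +
          (∫⁻ a, (.ofReal (p - 1) * ‖(x - y) a‖ₑ ^ 2) ^ (p / 2) ∂μ) ^ (1 / (p / 2)) := by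
        rw [hnorm, hnorm']
    _ ≤ (∫⁻ a, (‖(x + y) a‖ₑ ^ 2 + .ofReal (p - 1) * ‖(x - y) a‖ₑ ^ 2) ^ (p / 2) ∂μ) ^
          (1 / (p / 2)) :=
        ENNReal.lintegral_Lp_add_lintegral_Lp_le_of_le_one ((hx.add hy).enorm.pow_const 2)
          (((hx.sub hy).enorm.pow_const 2).const_mul _) hr (by linarith)
    _ ≤ (2 ^ (p - 1) * (eLpNorm' x p μ ^ p + eLpNorm' y p μ ^ p)) ^ (2 / p) := by
        rw [one_div_div]
        gcongr
    _ ≤ 2 * (eLpNorm' x p μ ^ 2 + eLpNorm' y p μ ^ 2) :=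
        ENNReal.two_rpow_mul_rpow_add_rpow_rpow_le hp₀ hp₂ _ _

theorem Lp.norm_add_sq_add_mul_norm_sub_sq_le {α E : Type*} [MeasurableSpace α]
    {μ : Measure α} [NormedAddCommGroup E] [InnerProductSpace ℝ E] {p : ℝ} (hp₁ : 1 < p)
    (hp₂ : p ≤ 2) (x y : Lp E (.ofReal p) μ) :
    ‖x + y‖ ^ 2 + (p - 1) * ‖x - y‖ ^ 2 ≤ 2 * (‖x‖ ^ 2 + ‖y‖ ^ 2) := by
  have h := eLpNorm_add_sq_add_mul_eLpNorm_sub_sq_le hp₁ hp₂ (Lp.aestronglyMeasurable x)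
    (Lp.aestronglyMeasurable y)
  have : Fact (1 ≤ ENNReal.ofReal p) := ⟨ENNReal.one_le_ofReal.2 hp₁.le⟩
  have hofReal : ∀ z : Lp E (.ofReal p) μ, eLpNorm z (.ofReal p) μ = .ofReal ‖z‖ := fun z =>
    (ENNReal.ofReal_toReal (Lp.eLpNorm_ne_top z)).symm
  rw [← eLpNorm_congr_ae (Lp.coeFn_add x y), ← eLpNorm_congr_ae (Lp.coeFn_sub x y), hofReal,
    hofReal, hofReal, hofReal, ← ENNReal.ofReal_pow (norm_nonneg _),
    ← ENNReal.ofReal_pow (norm_nonneg _), ← ENNReal.ofReal_pow (norm_nonneg _),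
    ← ENNReal.ofReal_pow (norm_nonneg _), ← ENNReal.ofReal_mul (by linarith),
    ← ENNReal.ofReal_add (by positivity) (by positivity),
    ← ENNReal.ofReal_add (by positivity) (by positivity), ← ENNReal.ofReal_ofNat 2,
    ← ENNReal.ofReal_mul zero_le_two] at h
  exact (ENNReal.ofReal_le_ofReal_iff (by positivity)).1 h

theorem apply_zero_le_apply_one_of_two_mul_le_add {ψ : ℝ → ℝ} {c : ℝ}
    (hmid : ∀ s, 2 * ψ s ≤ ψ 0 + ψ (2 * s)) (hlow : ∀ t, ψ 0 - c * t ^ 2 ≤ ψ t) :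
    ψ 0 ≤ ψ 1 := by
  have hdyadic : ∀ n : ℕ, 2 ^ n * (ψ ((1 / 2) ^ n) - ψ 0) ≤ ψ 1 - ψ 0 := by
    intro n
    induction n with
    | zero => simp
    | succ n ih =>
      have h := hmid ((1 / 2) ^ (n + 1))
      rw [show 2 * (1 / 2 : ℝ) ^ (n + 1) = (1 / 2) ^ n by rw [pow_succ]; ring] at h
      calc (2 : ℝ) ^ (n + 1) * (ψ ((1 / 2) ^ (n + 1)) - ψ 0)
          = 2 ^ n * (2 * ψ ((1 / 2) ^ (n + 1)) - 2 * ψ 0) := by ring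
        _ ≤ 2 ^ n * (ψ ((1 / 2) ^ n) - ψ 0) :=
          mul_le_mul_of_nonneg_left (by linarith) (by positivity)
        _ ≤ ψ 1 - ψ 0 := ih
  have hbound : ∀ n : ℕ, -c * (1 / 2) ^ n ≤ ψ 1 - ψ 0 := fun n => calc
    -c * (1 / 2) ^ n = 2 ^ n * (-c * ((1 / 2) ^ n) ^ 2) := by
      have h : (2 : ℝ) ^ n * ((1 / 2) ^ n) ^ 2 = (1 / 2) ^ n := by
        rw [sq, ← mul_assoc, ← mul_pow]; norm_num
      linear_combination c * h
    _ ≤ 2 ^ n * (ψ ((1 / 2) ^ n) - ψ 0) := by gcongr; linarith [hlow ((1 / 2) ^ n)]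
    _ ≤ ψ 1 - ψ 0 := hdyadic n
  have hlim : Tendsto (fun n : ℕ => -c * (1 / 2 : ℝ) ^ n) atTop (𝓝 0) := by
    simpa using (tendsto_pow_atTop_nhds_zero_of_lt_one (r := (1 / 2 : ℝ)) (by norm_num)
      (by norm_num)).const_mul (-c)
  linarith [le_of_tendsto' hlim hbound]

theorem sq_norm_add_mul_sq_norm_le_sq_norm_add {E : Type*} [SeminormedAddCommGroup E]
    [NormedSpace ℝ E] {c : ℝ}
    (hE : ∀ x y : E, ‖x + y‖ ^ 2 + c * ‖x - y‖ ^ 2 ≤ 2 * (‖x‖ ^ 2 + ‖y‖ ^ 2)) {f g : E}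
    (horth : ∀ t : ℝ, ‖f‖ ≤ ‖f + t • g‖) : ‖f‖ ^ 2 + c * ‖g‖ ^ 2 ≤ ‖f + g‖ ^ 2 := by
  let ψ : ℝ → ℝ := fun t => ‖f + t • g‖ ^ 2 - c * ‖g‖ ^ 2 * t ^ 2
  suffices h : ψ 0 ≤ ψ 1 by
    simp only [ψ, zero_smul, add_zero, one_smul, one_pow, mul_one, ne_eq, OfNat.ofNat_ne_zero,
      not_false_eq_true, zero_pow, mul_zero, sub_zero] at h
    linarith
  refine apply_zero_le_apply_one_of_two_mul_le_add (c := c * ‖g‖ ^ 2) (fun s => ?_) fun t => ?_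
  · have h := hE f (f + (2 * s) • g)
    have hsum : f + (f + (2 * s) • g) = (2 : ℝ) • (f + s • g) := by module
    have hdiff : f - (f + (2 * s) • g) = (-(2 * s)) • g := by module
    rw [hsum, hdiff, norm_smul, norm_smul, Real.norm_two, Real.norm_eq_abs, mul_pow, mul_pow,
      sq_abs] at h
    simp only [ψ, zero_smul, add_zero]
    nlinarith
  · simp only [ψ, zero_smul, add_zero]
    nlinarith [pow_le_pow_left₀ (norm_nonneg f) (horth t) 2]

/-- Lower Pythagorean inequality for `1 < p ≤ 2`. -/
theorem stmt2 {α : Type*} [MeasurableSpace α] (μ : Measure α) (p : ℝ) (hp1 : 1 < p)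
    (hp2 : p ≤ 2) (f g : α → ℂ)
    (hf : MemLp f (ENNReal.ofReal p) μ) (hg : MemLp g (ENNReal.ofReal p) μ)
    (horth : ∀ β : ℂ, eLpNorm f (ENNReal.ofReal p) μ ≤ eLpNorm (f + β • g) (ENNReal.ofReal p) μ) :
    (eLpNorm f (ENNReal.ofReal p) μ).toReal ^ 2 +
        (p - 1) * (eLpNorm g (ENNReal.ofReal p) μ).toReal ^ 2 ≤
      (eLpNorm (f + g) (ENNReal.ofReal p) μ).toReal ^ 2 := by
  have : Fact (1 ≤ ENNReal.ofReal p) := ⟨ENNReal.one_le_ofReal.2 hp1.le⟩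
  have horth' : ∀ t : ℝ, ‖hf.toLp f‖ ≤ ‖hf.toLp f + t • hg.toLp g‖ := fun t => by
    rw [← MemLp.toLp_const_smul, ← MemLp.toLp_add, Lp.norm_toLp, Lp.norm_toLp]
    refine ENNReal.toReal_mono (hf.add (hg.const_smul t)).eLpNorm_ne_top ?_
    simpa [Complex.coe_smul] using horth t
  have hE := Lp.norm_add_sq_add_mul_norm_sub_sq_le (E := ℂ) (μ := μ) hp1 hp2
  have key := sq_norm_add_mul_sq_norm_le_sq_norm_add hE horth'
  rwa [← MemLp.toLp_add, Lp.norm_toLp, Lp.norm_toLp, Lp.norm_toLp] at key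
end

section
/- Let 1 < p < ∞ and let J be an inner function with J(0) ≠ 0. Set Ĵ = conj(J(0))·J and g* = 1 − (1 − Ĵ)^{2/p} (defined via the analytic branch of the power, valid since 1 − Ĵ is nonvanishing on 𝔻). Then for every integer k ≥ 0, ∫_𝕋 |1 − g*|^{p−2} · (1 − g*) · conj(z^k J) dm = 0; i.e., 1 − g* is Birkhoff–James orthogonal in L^p to z^k J for all k ≥ 0. -/
open Complex MeasureTheory Metric Filter Set
open scoped ENNReal

noncomputable def hardyNorm (p : ℝ) (f : ℂ → ℂ) : ℝ≥0∞ :=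
  ⨆ r : Set.Ioo (0:ℝ) 1,
    ((∫⁻ θ in Set.Ioc (0:ℝ) (2 * Real.pi),
        ENNReal.ofReal (‖f (((r : ℝ) : ℂ) * Complex.exp ((θ : ℂ) * Complex.I))‖ ^ p)) /
      ENNReal.ofReal (2 * Real.pi)) ^ (1 / p)

def MemHp (p : ℝ) (f : ℂ → ℂ) : Prop :=
  DifferentiableOn ℂ f (Metric.ball (0:ℂ) 1) ∧ hardyNorm p f < ⊤

def IsInner (J : ℂ → ℂ) : Prop :=
  DifferentiableOn ℂ J (Metric.ball (0:ℂ) 1) ∧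
  (∀ z ∈ Metric.ball (0:ℂ) 1, ‖J z‖ ≤ 1) ∧
  (∀ᵐ (θ : ℝ) ∂(MeasureTheory.volume.restrict (Set.Ioc (0:ℝ) (2 * Real.pi))),
    Filter.Tendsto
      (fun r : ℝ => ‖J (((r : ℝ) : ℂ) * Complex.exp ((θ : ℂ) * Complex.I))‖)
      (nhdsWithin 1 (Set.Iio 1)) (nhds 1))

/-!
Write `w = 1 - conj (J 0) · J`. On the circle `|w^(2/p)|^(p-2) · w^(2/p) = conj (w^((p-2)/p)) · w`
and `w · conj J = conj (J - J 0)`, so the integrand is the conjugate of the boundary function of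
`z^k · w^((p-2)/p) · (J - J 0)`. If `|J 0| < 1`, this is a bounded holomorphic function on the disc
vanishing at `0`, so the mean value property on the circles of radius `r < 1` and dominated
convergence as `r → 1` show that its boundary function has mean zero. If `|J 0| = 1`, `J` is
constant by the maximum principle and `w` vanishes on the circle.
-/

open scoped Topology Real ComplexConjugate

lemma ofReal_mul_exp_mem_ball {r : ℝ} (hr : |r| < 1) (θ : ℝ) :
    (r : ℂ) * exp ((θ : ℂ) * I) ∈ ball (0 : ℂ) 1 := by
  simpa [norm_exp_ofReal_mul_I] using hr

lemma eventually_ofReal_mul_exp_mem_ball :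
    ∀ᶠ r : ℝ in 𝓝[<] 1, ∀ θ : ℝ, (r : ℂ) * exp ((θ : ℂ) * I) ∈ ball (0 : ℂ) 1 := by
  filter_upwards [Ioo_mem_nhdsLT (show (-1 : ℝ) < 1 by norm_num)] with r hr θ
  exact ofReal_mul_exp_mem_ball (abs_lt.2 hr) θ

lemma tendsto_ofReal_mul_exp_nhdsLT_one (θ : ℝ) :
    Tendsto (fun r : ℝ => (r : ℂ) * exp ((θ : ℂ) * I)) (𝓝[<] 1) (𝓝 (exp ((θ : ℂ) * I))) :=
  ((continuous_ofReal.mul continuous_const).tendsto' 1 _ (by simp)).mono_left nhdsWithin_le_nhds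

lemma integral_Ioc_ofReal_mul_exp_eq_two_pi_mul {f : ℂ → ℂ}
    (hf : DifferentiableOn ℂ f (ball 0 1)) {r : ℝ} (hr : |r| < 1) :
    ∫ θ in Ioc 0 (2 * π), f (r * exp ((θ : ℂ) * I)) = 2 * π * f 0 := by
  have hmean := (hf.diffContOnCl_ball (closedBall_subset_ball hr)).circleAverage
  rw [Real.circleAverage_def, intervalIntegral.integral_of_le Real.two_pi_pos.le,
    Complex.real_smul, ofReal_inv, inv_mul_eq_iff_eq_mul₀ (by simp [Real.pi_ne_zero])] at hmean
  simpa [circleMap] using hmean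

lemma integral_Ioc_boundary_eq_two_pi_mul {f : ℂ → ℂ} {fb : ℝ → ℂ} {M : ℝ}
    (hf : DifferentiableOn ℂ f (ball 0 1)) (hM : ∀ z ∈ ball (0 : ℂ) 1, ‖f z‖ ≤ M)
    (hfb : ∀ᵐ θ : ℝ ∂volume.restrict (Ioc 0 (2 * π)),
      Tendsto (fun r : ℝ => f (r * exp ((θ : ℂ) * I))) (𝓝[<] 1) (𝓝 (fb θ))) :
    ∫ θ in Ioc 0 (2 * π), fb θ = 2 * π * f 0 := by
  have hlim := tendsto_integral_filter_of_dominated_convergence (fun _ => M)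
    (eventually_ofReal_mul_exp_mem_ball.mono fun r hr =>
      (hf.continuousOn.comp_continuous (by fun_prop) hr).aestronglyMeasurable)
    (eventually_ofReal_mul_exp_mem_ball.mono fun r hr =>
      ae_of_all _ fun θ => hM _ (hr θ))
    (integrable_const M) hfb
  refine tendsto_nhds_unique hlim (tendsto_const_nhds.congr' ?_)
  filter_upwards [Ioo_mem_nhdsLT (show (-1 : ℝ) < 1 by norm_num)] with r hr
  exact (integral_Ioc_ofReal_mul_exp_eq_two_pi_mul hf (abs_lt.2 hr)).symm

lemma integral_Ioc_exp_pow_mul_comp_boundary_eq_zero {J Φ : ℂ → ℂ} {jb : ℝ → ℂ}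
    (hJ : DifferentiableOn ℂ J (ball 0 1)) (hJ1 : MapsTo J (ball 0 1) (closedBall 0 1))
    (hjb : ∀ᵐ θ : ℝ ∂volume.restrict (Ioc 0 (2 * π)),
      Tendsto (fun r : ℝ => J (r * exp ((θ : ℂ) * I))) (𝓝[<] 1) (𝓝 (jb θ)))
    (hΦ : ∀ u ∈ closedBall (0 : ℂ) 1, DifferentiableAt ℂ Φ u) (hΦ0 : Φ (J 0) = 0) (k : ℕ) :
    ∫ θ in Ioc 0 (2 * π), exp ((θ : ℂ) * I) ^ k * Φ (jb θ) = 0 := by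
  obtain ⟨C, hC⟩ := (isCompact_closedBall (0 : ℂ) 1).exists_bound_of_continuousOn
    fun u hu => (hΦ u hu).continuousAt.continuousWithinAt
  have hjb1 : ∀ᵐ θ : ℝ ∂volume.restrict (Ioc 0 (2 * π)), jb θ ∈ closedBall (0 : ℂ) 1 := by
    filter_upwards [hjb] with θ hθ
    exact isClosed_closedBall.mem_of_tendsto hθ
      (eventually_ofReal_mul_exp_mem_ball.mono fun r hr => hJ1 (hr θ))
  rw [integral_Ioc_boundary_eq_two_pi_mul (f := fun z => z ^ k * Φ (J z)) (M := C)]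
  · simp [hΦ0]
  · exact (differentiableOn_pow k).mul fun z hz =>
      (hΦ _ (hJ1 hz)).comp_differentiableWithinAt z (hJ z hz)
  · intro z hz
    rw [norm_mul, norm_pow]
    exact (mul_le_of_le_one_left (norm_nonneg _)
      (pow_le_one₀ (norm_nonneg z) (mem_ball_zero_iff.1 hz).le)).trans (hC _ (hJ1 hz))
  · filter_upwards [hjb, hjb1] with θ hθ hθ1
    exact ((tendsto_ofReal_mul_exp_nhdsLT_one θ).pow k).mul
      ((hΦ _ hθ1).continuousAt.tendsto.comp hθ)

lemma ofReal_norm_cpow_rpow_mul_cpow {p : ℝ} (hp : p ≠ 0) (w : ℂ) :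
    ((‖w ^ (2 / p : ℂ)‖ ^ (p - 2) : ℝ) : ℂ) * w ^ (2 / p : ℂ) =
      conj (w ^ (((p : ℂ) - 2) / p)) * w := by
  have hpc : (p : ℂ) ≠ 0 := ofReal_ne_zero.2 hp
  rcases eq_or_ne w 0 with rfl | hw
  · simp [zero_cpow (div_ne_zero two_ne_zero hpc)]
  have h2p : (2 / p : ℂ) = ((2 / p : ℝ) : ℂ) := by push_cast; ring
  have hep : ((p : ℂ) - 2) / p = (((p - 2) / p : ℝ) : ℂ) := by push_cast; ring
  have hre : ((log w).re : ℂ) = (log w + conj (log w)) / 2 := by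
    rw [add_conj]; push_cast; ring
  rw [h2p, hep, cpow_def_of_ne_zero hw, cpow_def_of_ne_zero hw, norm_exp, re_mul_ofReal,
    Real.rpow_def_of_pos (Real.exp_pos _), Real.log_exp, ofReal_exp, ← exp_conj, map_mul,
    conj_ofReal]
  conv_rhs => arg 2; rw [← exp_log hw]
  rw [← exp_add, ← exp_add]
  congr 1
  push_cast
  rw [hre]
  field_simp
  ring

lemma ofReal_norm_cpow_rpow_mul_cpow_mul_conj {p : ℝ} (hp : p ≠ 0) {u : ℂ} (hu : ‖u‖ = 1)
    (c ζ : ℂ) :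
    ((‖(1 - conj c * u) ^ (2 / p : ℂ)‖ ^ (p - 2) : ℝ) : ℂ) * (1 - conj c * u) ^ (2 / p : ℂ) *
        conj (ζ * u) =
      conj (ζ * ((1 - conj c * u) ^ (((p : ℂ) - 2) / p) * (u - c))) := by
  have hu' : u * conj u = 1 := by simp [mul_conj', hu]
  rw [ofReal_norm_cpow_rpow_mul_cpow hp]
  simp only [map_mul, map_sub]
  linear_combination (-(conj ζ * conj ((1 - conj c * u) ^ (((p : ℂ) - 2) / p)) * conj c)) * hu'

lemma one_sub_mul_mem_slitPlane {a u : ℂ} (ha : ‖a‖ < 1) (hu : ‖u‖ ≤ 1) :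
    1 - a * u ∈ slitPlane := by
  rw [sub_eq_add_neg]
  refine mem_slitPlane_of_norm_lt_one ?_
  rw [norm_neg, norm_mul]
  exact mul_lt_one_of_nonneg_of_lt_one_left (norm_nonneg a) ha hu

lemma radial_limit_eq_of_norm_eq_one {J : ℂ → ℂ} (hJ : DifferentiableOn ℂ J (ball 0 1))
    (hJ1 : MapsTo J (ball 0 1) (closedBall 0 1)) (h1 : ‖J 0‖ = 1) {θ : ℝ} {v : ℂ}
    (hv : Tendsto (fun r : ℝ => J (r * exp ((θ : ℂ) * I))) (𝓝[<] 1) (𝓝 v)) :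
    v = J 0 := by
  have hconst : EqOn J (fun _ => J 0) (ball 0 1) :=
    eqOn_of_isPreconnected_of_isMaxOn_norm (convex_ball (0 : ℂ) 1).isPreconnected isOpen_ball hJ
      (mem_ball_self one_pos) fun z hz => by simpa [h1] using hJ1 hz
  exact tendsto_nhds_unique hv <| tendsto_const_nhds.congr' <|
    eventually_ofReal_mul_exp_mem_ball.mono fun r hr => (hconst (hr θ)).symm

theorem stmt10_general (p : ℝ) (hp : 1 < p) (J : ℂ → ℂ) (hJ : IsInner J)
    (jb : ℝ → ℂ)
    (hjb : ∀ᵐ (θ : ℝ) ∂(MeasureTheory.volume.restrict (Set.Ioc (0:ℝ) (2 * Real.pi))),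
      Filter.Tendsto (fun r : ℝ => J (((r : ℝ) : ℂ) * Complex.exp ((θ : ℂ) * Complex.I)))
        (nhdsWithin 1 (Set.Iio 1)) (nhds (jb θ))) :
    ∀ k : ℕ,
      ∫ θ in Set.Ioc (0:ℝ) (2 * Real.pi),
        ((‖(1 - (starRingEnd ℂ) (J 0) * jb θ) ^ ((2 / p : ℂ))‖ ^ (p - 2) : ℝ) : ℂ) *
          ((1 - (starRingEnd ℂ) (J 0) * jb θ) ^ ((2 / p : ℂ))) *
          (starRingEnd ℂ) (Complex.exp ((θ : ℂ) * Complex.I) ^ k * jb θ) = 0 := by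
  intro k
  obtain ⟨hJd, hJb, hJr⟩ := hJ
  have hJ1 : MapsTo J (ball 0 1) (closedBall 0 1) := fun z hz =>
    mem_closedBall_zero_iff.2 (hJb z hz)
  have hp0 : p ≠ 0 := (zero_lt_one.trans hp).ne'
  rcases (hJb 0 (mem_ball_self one_pos)).lt_or_eq with hlt | heq
  · have hjb_norm : ∀ᵐ θ : ℝ ∂volume.restrict (Ioc 0 (2 * π)), ‖jb θ‖ = 1 := by
      filter_upwards [hjb, hJr] with θ hθ hθ1 using tendsto_nhds_unique hθ.norm hθ1
    have hmean := integral_Ioc_exp_pow_mul_comp_boundary_eq_zero hJd hJ1 hjb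
      (Φ := fun u => (1 - conj (J 0) * u) ^ (((p : ℂ) - 2) / p) * (u - J 0))
      (fun u hu => by
        have := one_sub_mul_mem_slitPlane (by rwa [norm_conj]) (mem_closedBall_zero_iff.1 hu)
        fun_prop (disch := assumption))
      (by simp) k
    calc _ = ∫ θ in Ioc 0 (2 * π), conj (exp ((θ : ℂ) * I) ^ k *
            ((1 - conj (J 0) * jb θ) ^ (((p : ℂ) - 2) / p) * (jb θ - J 0))) :=
          integral_congr_ae <| hjb_norm.mono fun θ hθ =>
            ofReal_norm_cpow_rpow_mul_cpow_mul_conj hp0 hθ _ _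
      _ = 0 := by rw [integral_conj, hmean, map_zero]
  · refine integral_eq_zero_of_ae ?_
    filter_upwards [hjb] with θ hθ
    rw [radial_limit_eq_of_norm_eq_one hJd hJ1 heq hθ, mul_comm (conj _), mul_conj', heq]
    simp [zero_cpow (div_ne_zero two_ne_zero (ofReal_ne_zero.2 hp0))]

/-- With `g* = 1 - (1 - conj(J 0) J)^(2/p)`, for every `k ≥ 0`, the boundary integral
`∫ |1 - g*|^(p-2) (1 - g*) conj(z^k J) dm = 0`,
i.e. `1 - g*` is Birkhoff–James orthogonal in `L^p` to `z^k J`. -/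
theorem stmt10 (p : ℝ) (hp : 1 < p) (J : ℂ → ℂ) (hJ : IsInner J) (h0 : J 0 ≠ 0)
    (jb : ℝ → ℂ)
    (hjb : ∀ᵐ (θ : ℝ) ∂(MeasureTheory.volume.restrict (Set.Ioc (0:ℝ) (2 * Real.pi))),
      Filter.Tendsto (fun r : ℝ => J (((r : ℝ) : ℂ) * Complex.exp ((θ : ℂ) * Complex.I)))
        (nhdsWithin 1 (Set.Iio 1)) (nhds (jb θ))) :
    ∀ k : ℕ,
      ∫ θ in Set.Ioc (0:ℝ) (2 * Real.pi),
        ((‖(1 - (starRingEnd ℂ) (J 0) * jb θ) ^ ((2 / p : ℂ))‖ ^ (p - 2) : ℝ) : ℂ) *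
          ((1 - (starRingEnd ℂ) (J 0) * jb θ) ^ ((2 / p : ℂ))) *
          (starRingEnd ℂ) (Complex.exp ((θ : ℂ) * Complex.I) ^ k * jb θ) = 0 :=
  stmt10_general p hp J hJ jb hjb
end
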